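/- arXiv:1209.0584 — 10 statements merged into one kernel-verified Lean document; each statement's English description precedes it below -/
import Mathlib

section
/- For all natural numbers n ≥ 3 and m ≥ 3, the Fibonacci-Narayana numbers satisfy u(n+m) = u(n-1)·u(m+2) + u(n-2)·u(m) + u(n-3)·u(m+1). -/
/-- The Fibonacci-Narayana sequence. -/
def narayana : ℕ → ℤ
  | 0 => 0
  | 1 => 1
  | 2 => 1
  | n + 3 => narayana (n + 2) + narayana n

theorem narayana_aux (k m : ℕ) :
    narayana (k + m + 3) =
      narayana (k + 2) * narayana (m + 2) + narayana (k + 1) * narayana m +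
        narayana k * narayana (m + 1) := by
  match k with
  | 0 =>
    rw [show 0 + m + 3 = m + 3 from by omega,
      show narayana (m + 3) = narayana (m + 2) + narayana m from rfl]
    simp [narayana]
  | 1 =>
    rw [show 1 + m + 3 = (m + 1) + 3 from by omega,
      show narayana ((m + 1) + 3) = narayana (m + 1 + 2) + narayana (m + 1) from rfl,
      show m + 1 + 2 = m + 3 from by omega,
      show narayana (m + 3) = narayana (m + 2) + narayana m from rfl]
    simp [narayana]
  | 2 =>
    rw [show 2 + m + 3 = (m + 2) + 3 from by omega,
      show narayana ((m + 2) + 3) = narayana (m + 2 + 2) + narayana (m + 2) from rfl,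
      show m + 2 + 2 = (m + 1) + 3 from by omega,
      show narayana ((m + 1) + 3) = narayana (m + 1 + 2) + narayana (m + 1) from rfl,
      show m + 1 + 2 = m + 3 from by omega,
      show narayana (m + 3) = narayana (m + 2) + narayana m from rfl,
      show narayana (2 + 2) = 2 from rfl, show narayana (2 + 1) = 1 from rfl,
      show narayana 2 = 1 from rfl]
    ring
  | k + 3 =>
    have h1 := narayana_aux (k + 2) m
    have h2 := narayana_aux k m
    rw [show k + 2 + m + 3 = k + m + 5 from by omega,
      show k + 2 + 2 = k + 4 from by omega,
      show k + 2 + 1 = k + 3 from by omega] at h1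
    rw [show k + 3 + m + 3 = k + m + 6 from by omega,
      show k + 3 + 2 = k + 5 from by omega,
      show k + 3 + 1 = k + 4 from by omega]
    have e1 : narayana (k + m + 6) = narayana (k + m + 5) + narayana (k + m + 3) := by
      rw [show k + m + 6 = (k + m + 3) + 3 from by omega,
        show narayana ((k + m + 3) + 3) = narayana (k + m + 3 + 2) + narayana (k + m + 3) from rfl,
        show k + m + 3 + 2 = k + m + 5 from by omega]
    have e2 : narayana (k + 5) = narayana (k + 4) + narayana (k + 2) := by
      rw [show k + 5 = (k + 2) + 3 from by omega,
        show narayana ((k + 2) + 3) = narayana (k + 2 + 2) + narayana (k + 2) from rfl,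
        show k + 2 + 2 = k + 4 from by omega]
    have e3 : narayana (k + 4) = narayana (k + 3) + narayana (k + 1) := by
      rw [show k + 4 = (k + 1) + 3 from by omega,
        show narayana ((k + 1) + 3) = narayana (k + 1 + 2) + narayana (k + 1) from rfl,
        show k + 1 + 2 = k + 3 from by omega]
    have e4 : narayana (k + 3) = narayana (k + 2) + narayana k := rfl
    rw [e1, h1, h2, e2, e3, e4]
    ring

theorem narayana_add (n m : ℕ) (hn : 3 ≤ n) (hm : 3 ≤ m) :
    narayana (n + m) =
      narayana (n - 1) * narayana (m + 2) + narayana (n - 2) * narayana m +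
        narayana (n - 3) * narayana (m + 1) := by
  obtain ⟨k, rfl⟩ : ∃ k, n = k + 3 := ⟨n - 3, by omega⟩
  have h := narayana_aux k m
  rw [show k + 3 + m = k + m + 3 from by omega,
    show k + 3 - 1 = k + 2 from by omega,
    show k + 3 - 2 = k + 1 from by omega,
    show k + 3 - 3 = k from by omega]
  exact h
end

section
/- For all natural numbers n ≥ 2, the Fibonacci-Narayana numbers satisfy u(2n) = u(n+1)² + u(n-1)² − u(n-2)². -/
lemma narayana_step (j : ℕ) : narayana (j + 3) = narayana (j + 2) + narayana j := rfl

lemma narayana_add_s7 (k : ℕ) : ∀ m : ℕ, narayana (m + k + 4) =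
    narayana (k + 2) * narayana (m + 3) + narayana k * narayana (m + 2)
      + narayana (k + 1) * narayana (m + 1) := by
  induction k using Nat.strong_induction_on with
  | _ k ih =>
    match k with
    | 0 =>
      intro m
      norm_num [show narayana 0 = 0 from rfl, show narayana 1 = 1 from rfl,
        show narayana 2 = 1 from rfl]
      linear_combination narayana_step (m + 1)
    | 1 =>
      intro m
      norm_num [show narayana 1 = 1 from rfl, show narayana 2 = 1 from rfl,
        show narayana 3 = 1 by decide]
      linear_combination narayana_step (m + 2) + narayana_step (m + 1)
    | 2 =>
      intro m
      norm_num [show narayana 2 = 1 from rfl, show narayana 3 = 1 by decide,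
        show narayana 4 = 2 by decide]
      linear_combination narayana_step (m + 3) + narayana_step (m + 2) + narayana_step (m + 1)
    | (k + 3) =>
      intro m
      have e : m + (k + 3) + 4 = (m + k + 4) + 3 := by ring
      rw [e, narayana_step (m + k + 4)]
      have h2 := ih (k + 2) (by omega) m
      have h0 := ih k (by omega) m
      rw [show m + (k + 2) + 4 = m + k + 4 + 2 from by ring] at h2
      have s2 := narayana_step (k + 2)
      have s0 := narayana_step k
      have s1 := narayana_step (k + 1)
      simp only [show k + 3 + 2 = k + 5 from by ring, show k + 3 + 1 = k + 4 from by ring,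
        show k + 2 + 2 = k + 4 from by ring, show k + 2 + 1 = k + 3 from by ring,
        show k + 2 + 3 = k + 5 from by ring, show k + 1 + 2 = k + 3 from by ring,
        show k + 1 + 3 = k + 4 from by ring, show k + 0 + 3 = k + 3 from by ring] at h2 h0 s2 s0 s1 ⊢
      linear_combination h2 + h0 - s2 * narayana (m + 3)
        - s0 * narayana (m + 2) - s1 * narayana (m + 1)

theorem narayana_two_mul (n : ℕ) (hn : 2 ≤ n) :
    narayana (2 * n) =
      narayana (n + 1) ^ 2 + narayana (n - 1) ^ 2 - narayana (n - 2) ^ 2 := by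
  obtain ⟨m, rfl⟩ : ∃ m, n = m + 2 := ⟨n - 2, by omega⟩
  have e : 2 * (m + 2) = m + m + 4 := by ring
  rw [e, narayana_add_s7 m m]
  simp only [show m + 2 + 1 = m + 3 from rfl, show m + 2 - 1 = m + 1 from rfl,
    show m + 2 - 2 = m from rfl]
  linear_combination (-(narayana (m + 3) + narayana m)) * narayana_step m
end

section
/- If n ≡ 0, 7, or 5 (mod 8), then the Fibonacci-Narayana number u(n) is divisible by 3. -/
lemma narayana_key : ∀ n, (3 : ℤ) ∣ narayana (n + 8) - narayana n
  | 0 => by decide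
  | 1 => by decide
  | 2 => by decide
  | n + 3 => by
    have h1 := narayana_key (n + 2)
    have h2 := narayana_key n
    have e1 : n + 2 + 8 = n + 10 := by omega
    have e2 : n + 3 + 8 = n + 11 := by omega
    rw [e1] at h1
    rw [e2]
    have r1 : narayana (n + 11) = narayana (n + 10) + narayana (n + 8) := rfl
    have r2 : narayana (n + 3) = narayana (n + 2) + narayana n := rfl
    rw [r1, r2]
    omega

lemma narayana_aux_s9 (k r : ℕ) (h : (3 : ℤ) ∣ narayana r) :
    (3 : ℤ) ∣ narayana (8 * k + r) := by
  induction k with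
  | zero => simpa using h
  | succ k ih =>
    have := narayana_key (8 * k + r)
    have e : 8 * (k + 1) + r = (8 * k + r) + 8 := by omega
    rw [e]
    omega

theorem narayana_three_dvd (n : ℕ) (h : n % 8 = 0 ∨ n % 8 = 7 ∨ n % 8 = 5) :
    (3 : ℤ) ∣ narayana n := by
  have e : n = 8 * (n / 8) + n % 8 := by omega
  rw [e]
  rcases h with h | h | h <;> rw [h] <;> exact narayana_aux_s9 _ _ (by decide)
end

section
/- For all natural numbers n ≥ 2, u(n) = ∑_{m=0}^{⌊n/3⌋} C(⌊n/3⌋, m) · u(n − ⌊n/3⌋ − 2m), where C denotes the binomial coefficient and u is extended to negative indices by u(k) = u(k+3) − u(k+2). -/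
/-!
Unfolding `u x = u (x - 1) + u (x - 3)` once on every term of a sum is Pascal's rule in disguise:
after `j` unfoldings, `u x` is the sum of `C(j, m) u (x - j - 2m)`, the term with `m` steps of
size `3` and `j - m` steps of size `1`. Taking `j = ⌊n/3⌋` gives the identity.
-/

open Finset

theorem sum_choose_mul_sub_of_rec {R : Type*} [NonAssocSemiring R] {u : ℤ → R}
    (hrec : ∀ k, u (k + 3) = u (k + 2) + u k) (j : ℕ) (x : ℤ) :
    ∑ m ∈ range (j + 1), (j.choose m : R) * u (x - j - 2 * m) = u x := by
  induction j generalizing x with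
  | zero => simp
  | succ j ih =>
    have step_one : ∀ m : ℕ, x - (j + 1 : ℕ) - 2 * m = (x - 1) - j - 2 * m := fun m => by
      push_cast; ring
    have step_three : ∀ m : ℕ, x - (j + 1 : ℕ) - 2 * (m + 1 : ℕ) = (x - 3) - j - 2 * m :=
      fun m => by push_cast; ring
    rw [sum_choose_succ_mul (fun m _ => u (x - (j + 1 : ℕ) - 2 * m)) j]
    -- `step_one` would also match the shifted terms, so `step_three` must fire first.
    simp only [step_three]
    simp only [step_one, ih]
    simpa only [sub_add_cancel, show x - 3 + 2 = x - 1 by ring] using (hrec (x - 3)).symm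

theorem narayana_binomial_identity_general (u : ℤ → ℤ)
    (hrec : ∀ k : ℤ, u (k + 3) = u (k + 2) + u k)
    (n : ℕ) :
    ∑ m ∈ Finset.range (n / 3 + 1),
        (Nat.choose (n / 3) m : ℤ) * u ((n : ℤ) - (n / 3 : ℕ) - 2 * m) = u n :=
  sum_choose_mul_sub_of_rec hrec (n / 3) n

theorem narayana_binomial_identity (u : ℤ → ℤ)
    (h0 : u 0 = 0) (h1 : u 1 = 1) (h2 : u 2 = 1)
    (hrec : ∀ k : ℤ, u (k + 3) = u (k + 2) + u k)
    (n : ℕ) (hn : 2 ≤ n) :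
    ∑ m ∈ Finset.range (n / 3 + 1),
        (Nat.choose (n / 3) m : ℤ) * u ((n : ℤ) - (n / 3 : ℕ) - 2 * m) = u n :=
  narayana_binomial_identity_general u hrec n
end

section
/- In the generalized quaternion algebra H(β₁,β₂) over ℝ, the alternating sum ∑_{m=1}^{n} (-1)^{m+1} F_m of Fibonacci quaternions equals (-1)^{n+1} F_{n-1} + 1 + e₃ + e₄, for all n ≥ 1. -/
open scoped Quaternion

/-- The `n`th Fibonacci quaternion in the generalized quaternion algebra
`H(β₁, β₂) = ℍ[ℝ, -β₁, -β₂]` (so that `e₂² = -β₁`, `e₃² = -β₂`). -/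
def fibQuat (β₁ β₂ : ℝ) (n : ℕ) : ℍ[ℝ, -β₁, -β₂] :=
  ⟨Nat.fib n, Nat.fib (n + 1), Nat.fib (n + 2), Nat.fib (n + 3)⟩

/-! The Fibonacci quaternions satisfy the Fibonacci recurrence, and for any such sequence in a ring
the alternating sum telescopes: adding `-(-1)ⁿ F (n + 2) = -(-1)ⁿ (F n + F (n + 1))` to
`(-1)ⁿ F n + c` gives `(-1)ⁿ⁺¹ F (n + 1) + c`, with constant `c = F 1 - F 0 = 1 + e₃ + e₄`. -/

theorem sum_Icc_neg_one_pow_mul_of_add_eq {R : Type*} [Ring R] (F : ℕ → R)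
    (hF : ∀ k, F k + F (k + 1) = F (k + 2)) (n : ℕ) :
    ∑ m ∈ Finset.Icc 1 (n + 1), (-1 : R) ^ (m + 1) * F m = (-1) ^ n * F n + (F 1 - F 0) := by
  induction n with
  | zero => simp
  | succ n ih =>
    rw [Finset.sum_Icc_succ_top (by omega), ih, ← hF n]
    simp only [pow_succ, mul_neg, mul_one, neg_neg]
    noncomm_ring

theorem fibQuat_add (β₁ β₂ : ℝ) (k : ℕ) :
    fibQuat β₁ β₂ k + fibQuat β₁ β₂ (k + 1) = fibQuat β₁ β₂ (k + 2) := by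
  ext <;> simp only [fibQuat, QuaternionAlgebra.re_add, QuaternionAlgebra.imI_add,
    QuaternionAlgebra.imJ_add, QuaternionAlgebra.imK_add] <;> exact_mod_cast Nat.fib_add_two.symm

theorem fibQuat_one_sub_fibQuat_zero (β₁ β₂ : ℝ) :
    fibQuat β₁ β₂ 1 - fibQuat β₁ β₂ 0 =
      1 + (⟨0, 0, 1, 0⟩ : ℍ[ℝ, -β₁, -β₂]) + (⟨0, 0, 0, 1⟩ : ℍ[ℝ, -β₁, -β₂]) := by
  ext <;> norm_num [fibQuat]

theorem fibQuat_alternating_sum (β₁ β₂ : ℝ) (n : ℕ) (hn : 1 ≤ n) :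
    ∑ m ∈ Finset.Icc 1 n, (-1 : ℍ[ℝ, -β₁, -β₂]) ^ (m + 1) * fibQuat β₁ β₂ m =
      (-1 : ℍ[ℝ, -β₁, -β₂]) ^ (n + 1) * fibQuat β₁ β₂ (n - 1) + 1 +
        (⟨0, 0, 1, 0⟩ : ℍ[ℝ, -β₁, -β₂]) + (⟨0, 0, 0, 1⟩ : ℍ[ℝ, -β₁, -β₂]) := by
  obtain ⟨n, rfl⟩ := Nat.exists_eq_add_of_le' hn
  rw [sum_Icc_neg_one_pow_mul_of_add_eq _ (fibQuat_add β₁ β₂), fibQuat_one_sub_fibQuat_zero,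
    Nat.add_sub_cancel, pow_add _ n 2]
  simp only [add_assoc, even_two, Even.neg_one_pow, mul_one]
end

section
/- In the generalized quaternion algebra H(β₁,β₂), for generalized Fibonacci quaternions H_m^{p,q}: ∑_{m=1}^{n} (-1)^{m+1} H_m^{p,q} = (-1)^{n+1} H_{n-1}^{p,q} − p + q + p·e₂ + q·e₃ + (p+q)·e₄, for all n ≥ 1. -/
open scoped Quaternion

/-- The generalized Fibonacci sequence with `h 0 = p`, `h 1 = q`. -/
def gfib (p q : ℤ) : ℕ → ℤ
  | 0 => p
  | 1 => q
  | n + 2 => gfib p q (n + 1) + gfib p q n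

/-- The `n`th generalized Fibonacci quaternion in `H(β₁, β₂) = ℍ[ℝ, -β₁, -β₂]`. -/
def gfibQuat (β₁ β₂ : ℝ) (p q : ℤ) (n : ℕ) : ℍ[ℝ, -β₁, -β₂] :=
  ⟨(gfib p q n : ℝ), (gfib p q (n + 1) : ℝ), (gfib p q (n + 2) : ℝ),
    (gfib p q (n + 3) : ℝ)⟩

theorem sum_Icc_neg_one_pow_mul_of_fib_rec {R : Type*} [Ring R] {f : ℕ → R}
    (hf : ∀ n, f (n + 2) = f (n + 1) + f n) (n : ℕ) :
    ∑ m ∈ Finset.Icc 1 (n + 1), (-1 : R) ^ (m + 1) * f m = (-1) ^ n * f n + (f 1 - f 0) := by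
  induction n with
  | zero => simp
  | succ n ih =>
    -- the new term `(-1)^(n+3) f (n+2)` splits into `-(-1)^n f n`, cancelling the old boundary
    -- term, and the new boundary term `(-1)^(n+1) f (n+1)`
    rw [Finset.sum_Icc_succ_top (by omega), ih, hf]
    simp only [pow_succ, mul_neg, mul_one, neg_neg, neg_mul, mul_add]
    abel

theorem gfib_add_two (p q : ℤ) (n : ℕ) : gfib p q (n + 2) = gfib p q (n + 1) + gfib p q n :=
  rfl

theorem gfibQuat_add_two (β₁ β₂ : ℝ) (p q : ℤ) (n : ℕ) :
    gfibQuat β₁ β₂ p q (n + 2) = gfibQuat β₁ β₂ p q (n + 1) + gfibQuat β₁ β₂ p q n := by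
  ext <;> simp only [gfibQuat, QuaternionAlgebra.re_add, QuaternionAlgebra.imI_add,
    QuaternionAlgebra.imJ_add, QuaternionAlgebra.imK_add] <;> exact_mod_cast gfib_add_two p q _

theorem gfibQuat_alternating_sum (β₁ β₂ : ℝ) (p q : ℤ) (n : ℕ) (hn : 1 ≤ n) :
    ∑ m ∈ Finset.Icc 1 n, (-1 : ℍ[ℝ, -β₁, -β₂]) ^ (m + 1) * gfibQuat β₁ β₂ p q m =
      (-1 : ℍ[ℝ, -β₁, -β₂]) ^ (n + 1) * gfibQuat β₁ β₂ p q (n - 1)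
        - (p : ℝ) • (1 : ℍ[ℝ, -β₁, -β₂]) + (q : ℝ) • (1 : ℍ[ℝ, -β₁, -β₂])
        + (p : ℝ) • (⟨0, 1, 0, 0⟩ : ℍ[ℝ, -β₁, -β₂])
        + (q : ℝ) • (⟨0, 0, 1, 0⟩ : ℍ[ℝ, -β₁, -β₂])
        + ((p : ℝ) + (q : ℝ)) • (⟨0, 0, 0, 1⟩ : ℍ[ℝ, -β₁, -β₂]) := by
  obtain ⟨k, rfl⟩ := Nat.exists_eq_add_of_le' hn
  have hsign : (-1 : ℍ[ℝ, -β₁, -β₂]) ^ (k + 1 + 1) = (-1) ^ k := by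
    rw [pow_succ, pow_succ, mul_assoc, neg_one_mul, neg_neg, mul_one]
  rw [sum_Icc_neg_one_pow_mul_of_fib_rec (gfibQuat_add_two β₁ β₂ p q), Nat.add_sub_cancel,
    hsign]
  -- the remaining constant is `H₁ - H₀ = (q - p) + p e₂ + q e₃ + (p + q) e₄`
  ext <;> simp [gfibQuat, gfib] <;> ring
end

section
/- For β₁ = β₂ = 1, the norm of the nth Fibonacci quaternion F_n in the real quaternions equals 3·f(2n+3), i.e., f(n)² + f(n+1)² + f(n+2)² + f(n+3)² = 3·f(2n+3). -/
theorem fib_quat_norm_div (n : ℕ) :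
    Nat.fib n ^ 2 + Nat.fib (n + 1) ^ 2 + Nat.fib (n + 2) ^ 2 + Nat.fib (n + 3) ^ 2 =
      3 * Nat.fib (2 * n + 3) := by
  have h : Nat.fib (2 * n + 3) = Nat.fib (n + 2) ^ 2 + Nat.fib (n + 1) ^ 2 := by
    have := Nat.fib_two_mul_add_one (n + 1)
    simpa [Nat.mul_add, Nat.pow_two] using this
  have h2 : Nat.fib (n + 2) = Nat.fib n + Nat.fib (n + 1) := Nat.fib_add_two
  have h3 : Nat.fib (n + 3) = Nat.fib (n + 1) + Nat.fib (n + 2) := Nat.fib_add_two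
  rw [h, h3, h2]; ring
end

section
/- For the Fibonacci-Narayana quaternions U_n in H(β₁,β₂), ∑_{m=0}^{n} U_m = U_{n+3} − U_2 for all n ≥ 0. -/
open scoped Quaternion

/-- The `n`th Fibonacci-Narayana quaternion in `H(β₁, β₂) = ℍ[ℝ, -β₁, -β₂]`. -/
def narayanaQuat (β₁ β₂ : ℝ) (n : ℕ) : ℍ[ℝ, -β₁, -β₂] :=
  ⟨(narayana n : ℝ), (narayana (n + 1) : ℝ), (narayana (n + 2) : ℝ),
    (narayana (n + 3) : ℝ)⟩

/-! Every sequence `f` with `f (n + 3) = f (n + 2) + f n` satisfies the sum identity, since adding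
`f (n + 1)` to `f (n + 3) - f 2` gives `f (n + 4) - f 2`; the Narayana quaternions are such a
sequence because the recurrence holds in each coordinate. -/

theorem Finset.sum_range_succ_eq_sub_of_add_three {M : Type*} [AddCommGroup M] {f : ℕ → M}
    (hf : ∀ n, f (n + 3) = f (n + 2) + f n) (n : ℕ) :
    ∑ m ∈ Finset.range (n + 1), f m = f (n + 3) - f 2 := by
  induction n with
  | zero => simp [hf 0]
  | succ n ih =>
    rw [Finset.sum_range_succ, ih, hf (n + 1)]
    abel

theorem narayana_add_three (n : ℕ) : narayana (n + 3) = narayana (n + 2) + narayana n := rfl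

theorem narayanaQuat_add_three (β₁ β₂ : ℝ) (n : ℕ) :
    narayanaQuat β₁ β₂ (n + 3) = narayanaQuat β₁ β₂ (n + 2) + narayanaQuat β₁ β₂ n := by
  have hcast (k : ℕ) : (narayana (k + 3) : ℝ) = narayana (k + 2) + narayana k := by
    exact_mod_cast narayana_add_three k
  rw [narayanaQuat, narayanaQuat, narayanaQuat, QuaternionAlgebra.mk_add_mk]
  ext
  · exact hcast n
  · exact hcast (n + 1)
  · exact hcast (n + 2)
  · exact hcast (n + 3)

theorem narayanaQuat_sum (β₁ β₂ : ℝ) (n : ℕ) :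
    ∑ m ∈ Finset.range (n + 1), narayanaQuat β₁ β₂ m =
      narayanaQuat β₁ β₂ (n + 3) - narayanaQuat β₁ β₂ 2 :=
  Finset.sum_range_succ_eq_sub_of_add_three (narayanaQuat_add_three β₁ β₂) n
end

section
/- For the Fibonacci-Narayana quaternions U_n in H(β₁,β₂), ∑_{m=0}^{n} U_{3m} = U_{3n+1} − 1 − e₄ for all n ≥ 0. -/
open scoped Quaternion

/-! Since `x (3m + 3) = x (3m + 4) - x (3m + 1)`, the sum of every third term of a
Narayana-type recurrence telescopes. -/

theorem sum_range_three_mul_of_add_three {G : Type*} [AddCommGroup G] {x : ℕ → G}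
    (hx : ∀ n, x (n + 3) = x (n + 2) + x n) (n : ℕ) :
    ∑ m ∈ Finset.range (n + 1), x (3 * m) = x (3 * n + 1) + (x 0 - x 1) := by
  induction n with
  | zero => simp
  | succ n ih =>
    rw [Finset.sum_range_succ, ih, show 3 * (n + 1) + 1 = 3 * n + 1 + 3 by ring, hx,
      show 3 * (n + 1) = 3 * n + 1 + 2 by ring]
    abel

theorem narayanaQuat_zero_sub_one (β₁ β₂ : ℝ) :
    narayanaQuat β₁ β₂ 0 - narayanaQuat β₁ β₂ 1 = -1 - (⟨0, 0, 0, 1⟩ : ℍ[ℝ, -β₁, -β₂]) := by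
  ext <;> norm_num [narayanaQuat, narayana]

theorem narayanaQuat_sum_three_mul (β₁ β₂ : ℝ) (n : ℕ) :
    ∑ m ∈ Finset.range (n + 1), narayanaQuat β₁ β₂ (3 * m) =
      narayanaQuat β₁ β₂ (3 * n + 1) - 1 - (⟨0, 0, 0, 1⟩ : ℍ[ℝ, -β₁, -β₂]) := by
  rw [sum_range_three_mul_of_add_three (narayanaQuat_add_three β₁ β₂),
    narayanaQuat_zero_sub_one]
  abel
end

section
/- For all n ≥ 1, the Fibonacci-Narayana numbers (extended to negative indices) satisfy ∑_{i=0}^{n} C(n,i) · u(2n − 2i − 1) = u(3n − 1), where C(n,i) is the binomial coefficient. -/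
open Finset

/- The recurrence says that the shift `E` satisfies `E³ = E² + 1` on `u`, so that
`(1 + E²)ⁿ u = E³ⁿ u`; expanding the left side by the binomial theorem gives the identity. -/

theorem sum_choose_mul_add_two_mul_of_rec {R : Type*} [NonAssocSemiring R] (u : ℤ → R)
    (hrec : ∀ k : ℤ, u (k + 3) = u (k + 2) + u k) (n : ℕ) (m : ℤ) :
    ∑ i ∈ range (n + 1), (n.choose i : R) * u (m + 2 * i) = u (m + 3 * n) := by
  induction n generalizing m with
  | zero => simp
  | succ n ih =>
    have ih₂ : ∑ i ∈ range (n + 1), (n.choose i : R) * u (m + 2 * ↑(i + 1)) =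
        u (m + 3 * n + 2) := by
      rw [add_right_comm, ← ih (m + 2)]
      refine sum_congr rfl fun i _ => ?_
      push_cast
      ring_nf
    rw [sum_choose_succ_mul (fun i _ => u (m + 2 * i)) n, ih, ih₂, add_comm,
      ← hrec (m + 3 * n)]
    congr 1
    push_cast
    ring

theorem narayana_binomial_sum_general (u : ℤ → ℤ)
    (hrec : ∀ k : ℤ, u (k + 3) = u (k + 2) + u k)
    (n : ℕ) :
    ∑ i ∈ Finset.range (n + 1),
        (Nat.choose n i : ℤ) * u (2 * (n : ℤ) - 2 * i - 1) = u (3 * (n : ℤ) - 1) := by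
  rw [← sum_range_reflect]
  have reflect : ∀ j ∈ range (n + 1), (n.choose (n + 1 - 1 - j) : ℤ) *
      u (2 * (n : ℤ) - 2 * ↑(n + 1 - 1 - j) - 1) = (n.choose j : ℤ) * u (-1 + 2 * j) := by
    intro j hj
    have hjn : j ≤ n := Nat.lt_succ_iff.mp (mem_range.mp hj)
    rw [Nat.add_sub_cancel, Nat.choose_symm hjn, Nat.cast_sub hjn]
    ring_nf
  rw [sum_congr rfl reflect, sum_choose_mul_add_two_mul_of_rec u hrec]
  ring_nf

theorem narayana_binomial_sum (u : ℤ → ℤ)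
    (h0 : u 0 = 0) (h1 : u 1 = 1) (h2 : u 2 = 1)
    (hrec : ∀ k : ℤ, u (k + 3) = u (k + 2) + u k)
    (n : ℕ) (hn : 1 ≤ n) :
    ∑ i ∈ Finset.range (n + 1),
        (Nat.choose n i : ℤ) * u (2 * (n : ℤ) - 2 * i - 1) = u (3 * (n : ℤ) - 1) :=
  narayana_binomial_sum_general u hrec n
end
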